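/- arXiv:2301.04678 — 3 statements merged into one kernel-verified Lean document; each statement's English description precedes it below -/
import Mathlib

section
/- Let σ be a permutation of {1,…,n} with m wheels. Then the set S(σ), consisting of all permutations of {1,…,n} whose one-line notation is obtained by concatenating the m wheels of σ (each wheel kept intact as a contiguous block, in some order), has exactly m! elements; i.e., distinct orderings of the wheels yield distinct permutations. -/
/-!
Since σ is a permutation, the concatenation of the wheels has no repeated entries, so distinct
wheels are disjoint and each wheel is determined by its first entry. Reading two concatenations
of the same blocks from the left, the first blocks share their first entry and hence coincide;
peeling them off recovers the whole order of the blocks, so the order can be read off from the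
concatenation.
-/

namespace List

variable {α : Type*}

theorem eq_of_mem_of_head?_eq_of_nodup_flatten {L : List (List α)} (hL : L.flatten.Nodup)
    {l₁ l₂ : List α} (h₁ : l₁ ∈ L) (h₂ : l₂ ∈ L) (hne : l₁ ≠ [])
    (hhead : l₁.head? = l₂.head?) : l₁ = l₂ := by
  by_contra hne₁₂
  have : Std.Symm (@List.Disjoint α) := ⟨fun _ _ => List.Disjoint.symm⟩
  have hdisj : l₁.Disjoint l₂ := (nodup_flatten.mp hL).2.forall h₁ h₂ hne₁₂
  have hmem₂ : l₁.head hne ∈ l₂ :=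
    mem_of_mem_head? (by rw [← hhead, head?_eq_some_head hne]; rfl)
  exact hdisj (head_mem hne) hmem₂

theorem Nodup.of_flatten {L : List (List α)} (hL : L.flatten.Nodup)
    (hne : ∀ l ∈ L, l ≠ []) : L.Nodup :=
  (nodup_flatten.mp hL).2.imp_of_mem fun h₁ _ hdisj heq =>
    hne _ h₁ (eq_nil_iff_forall_not_mem.mpr fun _ hx => hdisj hx (heq ▸ hx))

theorem eq_of_perm_of_flatten_eq {L₁ L₂ : List (List α)} (hperm : L₁.Perm L₂)
    (hne : ∀ l ∈ L₂, l ≠ []) (hnodup : L₂.flatten.Nodup)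
    (hflat : L₁.flatten = L₂.flatten) : L₁ = L₂ := by
  induction L₁ generalizing L₂ with
  | nil => exact hperm.nil_eq
  | cons a t₁ ih =>
    obtain _ | ⟨b, t₂⟩ := L₂
    · exact absurd hperm.length_eq (by simp)
    have ha : a ∈ b :: t₂ := hperm.subset mem_cons_self
    have hane : a ≠ [] := hne a ha
    have hbne : b ≠ [] := hne b mem_cons_self
    have happ : a ++ t₁.flatten = b ++ t₂.flatten := by simpa using hflat
    have hab : a = b := by
      refine eq_of_mem_of_head?_eq_of_nodup_flatten hnodup ha mem_cons_self hane ?_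
      simpa [head?_append_of_ne_nil _ hane, head?_append_of_ne_nil _ hbne] using
        congrArg head? happ
    subst hab
    rw [ih hperm.cons_inv (fun l hl => hne l (mem_cons_of_mem _ hl))
      (nodup_append.mp (by simpa using hnodup)).2.1 (append_cancel_left happ)]

theorem injective_flatten_ofFn_comp_perm {m : ℕ} {f : Fin m → List α}
    (hf : (ofFn f).flatten.Nodup) (hne : ∀ k, f k ≠ []) :
    Function.Injective fun ρ : Equiv.Perm (Fin m) => (ofFn fun k => f (ρ k)).flatten := by
  intro ρ₁ ρ₂ h
  have hf_inj : Function.Injective f :=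
    nodup_ofFn.mp (hf.of_flatten (by simpa [mem_ofFn] using hne))
  have hperm : (ofFn (f ∘ ρ₁)).Perm (ofFn (f ∘ ρ₂)) :=
    (ρ₁.ofFn_comp_perm f).trans (ρ₂.ofFn_comp_perm f).symm
  have hnodup₂ : (ofFn (f ∘ ρ₂)).flatten.Nodup :=
    (ρ₂.ofFn_comp_perm f).flatten.nodup_iff.mpr hf
  have hblocks : ofFn (f ∘ ρ₁) = ofFn (f ∘ ρ₂) :=
    eq_of_perm_of_flatten_eq hperm (by simpa [mem_ofFn] using fun k => hne _) hnodup₂ h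
  exact DFunLike.coe_injective (hf_inj.comp_left (ofFn_injective hblocks))

end List

theorem stmt3_general (n m : ℕ) (σ : Equiv.Perm (Fin n))
    (Ws : Fin m → List (Fin n))
    (hjoin : (List.ofFn Ws).flatten = List.ofFn (fun i => σ i))
    (hne : ∀ k, Ws k ≠ []) :
    Function.Injective
        (fun ρ : Equiv.Perm (Fin m) => (List.ofFn (fun k => Ws (ρ k))).flatten) ∧
      {l : List (Fin n) |
        ∃ ρ : Equiv.Perm (Fin m), l = (List.ofFn (fun k => Ws (ρ k))).flatten}.ncard
        = Nat.factorial m := by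
  have hnodup : (List.ofFn Ws).flatten.Nodup := hjoin ▸ List.nodup_ofFn.mpr σ.injective
  have hinj := List.injective_flatten_ofFn_comp_perm hnodup hne
  refine ⟨hinj, ?_⟩
  have hset : {l : List (Fin n) | ∃ ρ : Equiv.Perm (Fin m),
      l = (List.ofFn (fun k => Ws (ρ k))).flatten} = Set.range fun ρ : Equiv.Perm (Fin m) =>
        (List.ofFn (fun k => Ws (ρ k))).flatten := by
    ext l; simp [eq_comm]
  rw [hset, Set.ncard_range_of_injective hinj, Nat.card_perm, Nat.card_eq_fintype_card,
    Fintype.card_fin]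

/-- Let σ be a permutation of {1,…,n} with m wheels `Ws 0, …, Ws (m-1)`
(nonempty contiguous blocks of the one-line notation whose concatenation, in order, is the
one-line notation of σ, and whose first entries are exactly the left-to-right maxima of σ).
Then the map sending an ordering ρ of the wheels to the permutation obtained by
concatenating the wheels in the order ρ is injective, so the set S(σ) of one-line notations
obtained by concatenating the m wheels in some order has exactly m! elements. -/
theorem stmt3 (n m : ℕ) (hn : 1 ≤ n) (σ : Equiv.Perm (Fin n))
    (Ws : Fin m → List (Fin n))
    (hjoin : (List.ofFn Ws).flatten = List.ofFn (fun i => σ i))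
    (hne : ∀ k, Ws k ≠ [])
    (hheads : ∀ k, ∀ x ∈ Ws k,
      ((∀ j, j < σ.symm x → σ j < x) ↔ (Ws k).head? = some x)) :
    Function.Injective
        (fun ρ : Equiv.Perm (Fin m) => (List.ofFn (fun k => Ws (ρ k))).flatten) ∧
      {l : List (Fin n) |
        ∃ ρ : Equiv.Perm (Fin m), l = (List.ofFn (fun k => Ws (ρ k))).flatten}.ncard
        = Nat.factorial m :=
  stmt3_general n m σ Ws hjoin hne
end

section
/- Let B_1,…,B_m be the wheels of a permutation σ of {1,…,n}, indexed so that max(B_1) < max(B_2) < ⋯ < max(B_m). For a permutation ρ of {1,…,m}, let τ_ρ be the permutation of {1,…,n} whose one-line notation is the concatenation B_{ρ(1)} B_{ρ(2)} ⋯ B_{ρ(m)}. Then the number of wheels of τ_ρ equals the number of left-to-right maxima of the sequence max(B_{ρ(1)}),…,max(B_{ρ(m)}). In particular, τ_ρ has exactly m wheels if and only if ρ is the identity, and otherwise τ_ρ has strictly fewer than m wheels. -/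
/-!
Inside a block that begins with its own maximum, no entry after the first can be a
left-to-right maximum, and the first one is a left-to-right maximum exactly when it beats the
maxima of all earlier blocks. So the left-to-right maxima of a concatenation of such blocks are
counted by the left-to-right maxima of the sequence of block maxima. That sequence has as many
left-to-right maxima as entries iff it is increasing, and since the wheels are indexed by
increasing maxima, this happens only for `ρ = 1`.
-/

section LeftToRightMaxima

variable {α : Type*} [LinearOrder α]

/-- Counts the entries of `l` that are left-to-right maxima of `p ++ l` for any prefix `p` with
maximum `M`; for `M = ⊥` these are the left-to-right maxima of `l`. -/
def lrMaxCountAbove : WithBot α → List α → ℕ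
  | _, [] => 0
  | M, a :: l => (if M < a then 1 else 0) + lrMaxCountAbove (max M a) l

theorem lrMaxCountAbove_le_length (M : WithBot α) (l : List α) :
    lrMaxCountAbove M l ≤ l.length := by
  induction l generalizing M with
  | nil => simp [lrMaxCountAbove]
  | cons a l ih =>
    have := ih (max M a)
    simp only [lrMaxCountAbove, List.length_cons]
    split <;> omega

theorem lrMaxCountAbove_append_of_forall_le {M : WithBot α} {t : List α}
    (ht : ∀ x ∈ t, (x : WithBot α) ≤ M) (r : List α) :
    lrMaxCountAbove M (t ++ r) = lrMaxCountAbove M r := by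
  induction t with
  | nil => rfl
  | cons a t ih =>
    have ha : (a : WithBot α) ≤ M := ht a List.mem_cons_self
    simp only [List.cons_append, lrMaxCountAbove, if_neg ha.not_gt, max_eq_left ha, zero_add]
    exact ih fun x hx => ht x (List.mem_cons_of_mem a hx)

theorem lrMaxCountAbove_flatten (d : α) {bs : List (List α)} (hne : ∀ b ∈ bs, b ≠ [])
    (hhead : ∀ b ∈ bs, ∀ x ∈ b, x ≤ b.headD d) (M : WithBot α) :
    lrMaxCountAbove M bs.flatten = lrMaxCountAbove M (bs.map (·.headD d)) := by
  induction bs generalizing M with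
  | nil => rfl
  | cons b bs ih =>
    obtain ⟨a, t, rfl⟩ := List.exists_cons_of_ne_nil (hne b List.mem_cons_self)
    have ht : ∀ x ∈ t, (x : WithBot α) ≤ max M a := fun x hx =>
      le_max_of_le_right (WithBot.coe_le_coe.mpr
        (hhead _ List.mem_cons_self x (List.mem_cons_of_mem a hx)))
    simp only [List.flatten_cons, List.cons_append, List.map_cons, List.headD_cons,
      lrMaxCountAbove, lrMaxCountAbove_append_of_forall_le ht]
    rw [ih (fun b hb => hne b (List.mem_cons_of_mem _ hb))
      (fun b hb => hhead b (List.mem_cons_of_mem _ hb))]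

theorem lrMaxCountAbove_eq_length_iff (M : WithBot α) (l : List α) :
    lrMaxCountAbove M l = l.length ↔ (∀ x ∈ l, M < x) ∧ l.Pairwise (· < ·) := by
  induction l generalizing M with
  | nil => simp [lrMaxCountAbove]
  | cons a l ih =>
    have := lrMaxCountAbove_le_length (max M a) l
    simp only [lrMaxCountAbove, List.length_cons, List.forall_mem_cons, List.pairwise_cons]
    by_cases hMa : M < a
    · rw [if_pos hMa, max_eq_right hMa.le, add_comm, Nat.add_right_cancel_iff, ih]
      constructor
      · rintro ⟨hl, hpw⟩
        exact ⟨⟨hMa, fun x hx => hMa.trans (hl x hx)⟩,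
          fun x hx => WithBot.coe_lt_coe.mp (hl x hx), hpw⟩
      · rintro ⟨-, hal, hpw⟩
        exact ⟨fun x hx => WithBot.coe_lt_coe.mpr (hal x hx), hpw⟩
    · rw [if_neg hMa]
      exact iff_of_false (by omega) fun h => hMa h.1.1

theorem lrMaxCountAbove_bot_eq_length_iff (l : List α) :
    lrMaxCountAbove ⊥ l = l.length ↔ l.Pairwise (· < ·) := by
  simp [lrMaxCountAbove_eq_length_iff]

theorem sum_range_ite_isLRMax (d : α) (M : WithBot α) (l : List α) :
    ∑ i ∈ Finset.range l.length,
      (if M < l.getD i d ∧ ∀ j < i, l.getD j d < l.getD i d then 1 else 0) =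
      lrMaxCountAbove M l := by
  induction l generalizing M with
  | nil => rfl
  | cons a l ih =>
    rw [List.length_cons, Finset.sum_range_succ', lrMaxCountAbove, ← ih (max M a), add_comm]
    congr 1
    · simp
    · refine Finset.sum_congr rfl fun i _ => if_congr ?_ rfl rfl
      simp only [List.getD_cons_succ, List.getD_cons_zero, Nat.forall_lt_succ_left, max_lt_iff,
        WithBot.coe_lt_coe]
      tauto

theorem card_filter_isLRMax (d : α) (l : List α) :
    ((Finset.range l.length).filter fun i => ∀ j < i, l.getD j d < l.getD i d).card =
      lrMaxCountAbove ⊥ l := by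
  rw [Finset.card_filter, ← sum_range_ite_isLRMax d]
  simp

end LeftToRightMaxima

theorem StrictMono.strictMono_comp_perm_iff {ι β : Type*} [LinearOrder ι] [Finite ι]
    [Preorder β] {f : ι → β} (hf : StrictMono f) (ρ : Equiv.Perm ι) :
    StrictMono (f ∘ ρ) ↔ ρ = 1 := by
  refine ⟨fun h => Equiv.ext fun i => ?_, by rintro rfl; exact hf⟩
  exact StrictMono.apply_eq fun i j hij => hf.lt_iff_lt.mp (h hij)

theorem stmt4_general (m : ℕ)
    (Ws : Fin m → List ℕ)
    (hne : ∀ k, Ws k ≠ [])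
    (hheadmax : ∀ k, ∀ x ∈ Ws k, x ≤ (Ws k).headD 0)
    (hmono : ∀ k k' : Fin m, k < k' → (Ws k).headD 0 < (Ws k').headD 0)
    (lrCount : List ℕ → ℕ)
    (hlr : ∀ l : List ℕ, lrCount l =
      ((Finset.range l.length).filter
        (fun i => ∀ j, j < i → l.getD j 0 < l.getD i 0)).card) :
    ∀ ρ : Equiv.Perm (Fin m),
      lrCount ((List.ofFn (fun k => Ws (ρ k))).flatten) =
          lrCount (List.ofFn (fun k => (Ws (ρ k)).headD 0)) ∧
      (lrCount ((List.ofFn (fun k => Ws (ρ k))).flatten) = m ↔ ρ = 1) ∧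
      (ρ ≠ 1 → lrCount ((List.ofFn (fun k => Ws (ρ k))).flatten) < m) := by
  intro ρ
  set heads := List.ofFn fun k => (Ws (ρ k)).headD 0
  have hcount (l : List ℕ) : lrCount l = lrMaxCountAbove ⊥ l := by
    rw [hlr, card_filter_isLRMax]
  have hflatten : lrMaxCountAbove ⊥ (List.ofFn fun k => Ws (ρ k)).flatten =
      lrMaxCountAbove ⊥ heads := by
    rw [lrMaxCountAbove_flatten 0, List.map_ofFn]
    · rfl
    · simpa [List.mem_ofFn] using fun k => hne (ρ k)
    · simpa [List.mem_ofFn] using fun k => hheadmax (ρ k)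
  have hlength : heads.length = m := List.length_ofFn
  have hid : lrMaxCountAbove ⊥ heads = m ↔ ρ = 1 := by
    conv_lhs => rw [← hlength]
    rw [lrMaxCountAbove_bot_eq_length_iff, List.pairwise_ofFn]
    exact StrictMono.strictMono_comp_perm_iff (f := fun k => (Ws k).headD 0) hmono ρ
  have hle : lrMaxCountAbove ⊥ heads ≤ m := hlength ▸ lrMaxCountAbove_le_length ⊥ heads
  simp only [hcount, hflatten, true_and]
  exact ⟨hid, fun hρ => hle.lt_of_ne (mt hid.mp hρ)⟩

/-- Let B_1,…,B_m be the wheels of a permutation σ of {1,…,n} (blocks of the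
one-line notation, each beginning with its own maximum element, and indexed so that
max(B_1) < ⋯ < max(B_m)).  For an ordering ρ of {1,…,m}, let τ_ρ be the permutation whose
one-line notation is the concatenation B_{ρ(1)} ⋯ B_{ρ(m)}.  Then the number of wheels of
τ_ρ (= number of left-to-right maxima of its one-line notation) equals the number of
left-to-right maxima of the sequence max(B_{ρ(1)}),…,max(B_{ρ(m)}); τ_ρ has exactly m
wheels iff ρ is the identity, and otherwise strictly fewer than m. -/
theorem stmt4 (n m : ℕ) (σ : Equiv.Perm (Fin n))
    (Ws : Fin m → List ℕ)
    (hjoin : (List.ofFn Ws).flatten = List.ofFn (fun i => ((σ i : Fin n) : ℕ)))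
    (hne : ∀ k, Ws k ≠ [])
    (hheadmax : ∀ k, ∀ x ∈ Ws k, x ≤ (Ws k).headD 0)
    (hmono : ∀ k k' : Fin m, k < k' → (Ws k).headD 0 < (Ws k').headD 0)
    (lrCount : List ℕ → ℕ)
    (hlr : ∀ l : List ℕ, lrCount l =
      ((Finset.range l.length).filter
        (fun i => ∀ j, j < i → l.getD j 0 < l.getD i 0)).card) :
    ∀ ρ : Equiv.Perm (Fin m),
      lrCount ((List.ofFn (fun k => Ws (ρ k))).flatten) =
          lrCount (List.ofFn (fun k => (Ws (ρ k)).headD 0)) ∧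
      (lrCount ((List.ofFn (fun k => Ws (ρ k))).flatten) = m ↔ ρ = 1) ∧
      (ρ ≠ 1 → lrCount ((List.ofFn (fun k => Ws (ρ k))).flatten) < m) :=
  stmt4_general m Ws hne hheadmax hmono lrCount hlr
end

section
/- Let w ≥ 3 and k ≥ 1. Suppose s_1,…,s_r and d_1,…,d_r are positive integers such that for each i either (wheel case) s_i ≥ 2 and d_i = s_i − 1, or (averaged-filter case) s_i ≥ w+1 and d_i = s_i − 2. If d_1 + ⋯ + d_r = k, then s_1 + ⋯ + s_r ≤ 2k. Consequently, any product of generators of H_k(conf(n,w);ℚ) in which no generator is a wheel on a single disk uses at most 2k disks, so H_k(conf(•,w);ℚ) is generated in degree at most 2k. -/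
/-- Let w ≥ 3 and k ≥ 1.  Suppose each generator i has s_i disks and
homological degree d_i, with either (wheel case) s_i ≥ 2 and d_i = s_i − 1, or
(averaged-filter case) s_i ≥ w+1 and d_i = s_i − 2.  If the degrees sum to k then the disk
counts sum to at most 2k: H_k(conf(•,w);ℚ) is generated in degree at most 2k. -/
theorem stmt12 (w k r : ℕ) (hw : 3 ≤ w) (hk : 1 ≤ k)
    (s d : Fin r → ℕ) (hs : ∀ i, 1 ≤ s i) (hd : ∀ i, 1 ≤ d i)
    (hcase : ∀ i, (2 ≤ s i ∧ d i = s i - 1) ∨ (w + 1 ≤ s i ∧ d i = s i - 2))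
    (hsum : ∑ i, d i = k) :
    ∑ i, s i ≤ 2 * k := by
  have key : ∀ i, s i ≤ 2 * d i := by
    intro i
    rcases hcase i with ⟨h1, h2⟩ | ⟨h1, h2⟩ <;> omega
  calc ∑ i, s i ≤ ∑ i, 2 * d i := Finset.sum_le_sum fun i _ => key i
    _ = 2 * k := by rw [← Finset.mul_sum, hsum]
end
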